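/- Let Ω be a connected weighted simplicial complex on [n], let a finite group G act on Ω with the action on ℱ̃ free, and let p ∈ 𝒫 be G-invariant. Then p admits an (Ω,G)-decomposition, i.e. rank_{(Ω,G)}(p) < ∞. Moreover, given any decomposition p = Σ_{j=1}^r p_j^[0](x^[0])⋯p_j^[n](x^[n]) with p_j^[i] ∈ ℝ[x^[i]], there exists an (Ω,G)-decomposition of p in which every local polynomial at site i is a nonnegative scalar multiple of some p_j^[i'](x^[i]) with i' in the G-orbit of i (zero multiples allowed). -/

import Mathlib

namespace PolyDec

open MvPolynomial

attribute [local instance] Classical.propDecidable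

noncomputable section

/-! ### Weighted simplicial complexes -/

/-- `Ω` is a weighted simplicial complex on `[n] = {0,…,n}`. -/
def IsWSC {n : ℕ} (Ω : Finset (Fin (n + 1)) → ℕ) : Prop :=
  (∀ S T : Finset (Fin (n + 1)), S ⊆ T → Ω S ∣ Ω T) ∧ ∀ i : Fin (n + 1), Ω {i} ≠ 0

/-- `F` is a facet of `Ω`: a maximal simplex. -/
def IsFacet {n : ℕ} (Ω : Finset (Fin (n + 1)) → ℕ) (F : Finset (Fin (n + 1))) : Prop :=
  Ω F ≠ 0 ∧ ∀ S : Finset (Fin (n + 1)), Ω S ≠ 0 → F ⊆ S → S = F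

/-- `Ω` is connected: any two vertices are joined by a chain of vertices such that
consecutive ones share a facet. -/
def Conn {n : ℕ} (Ω : Finset (Fin (n + 1)) → ℕ) : Prop :=
  ∀ i j : Fin (n + 1),
    Relation.ReflTransGen
      (fun a b => ∃ F : Finset (Fin (n + 1)), IsFacet Ω F ∧ a ∈ F ∧ b ∈ F) i j

/-- The multiset of facets `ℱ̃`: each facet `F` appears with multiplicity `Ω F`. -/
abbrev MultiFacet {n : ℕ} (Ω : Finset (Fin (n + 1)) → ℕ) : Type :=
  Σ F : {F : Finset (Fin (n + 1)) // IsFacet Ω F}, Fin (Ω F.1)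

/-- The sub-multiset `ℱ̃ᵢ` of multifacets containing the vertex `i`. -/
abbrev MFi {n : ℕ} (Ω : Finset (Fin (n + 1)) → ℕ) (i : Fin (n + 1)) : Type :=
  {F : MultiFacet Ω // i ∈ F.1.1}

/-- Restriction `α|ᵢ` of `α : ℱ̃ → I` to `ℱ̃ᵢ`. -/
def restr {n : ℕ} {Ω : Finset (Fin (n + 1)) → ℕ} {I : Type} (α : MultiFacet Ω → I)
    (i : Fin (n + 1)) : MFi Ω i → I :=
  fun F => α F.1

/-! ### Group actions on a weighted simplicial complex -/

/-- An action of a group `G` on the weighted simplicial complex `Ω`: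
an action on the vertices leaving `Ω` invariant, together with a refinement to an action on
the multiset of facets which is compatible with the collapse map. -/
structure GAct {n : ℕ} (Ω : Finset (Fin (n + 1)) → ℕ) (G : Type) [Group G] where
  act : G →* Equiv.Perm (Fin (n + 1))
  omega_inv : ∀ (g : G) (S : Finset (Fin (n + 1))), Ω (S.image (act g)) = Ω S
  actF : G →* Equiv.Perm (MultiFacet Ω)
  collapse : ∀ (g : G) (F : MultiFacet Ω), (actF g F).1.1 = F.1.1.image (act g)

variable {n : ℕ} {Ω : Finset (Fin (n + 1)) → ℕ} {G : Type} [Group G]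

/-- The action is free on `ℱ̃`. -/
def GAct.Free (A : GAct Ω G) : Prop :=
  ∀ (g : G) (F : MultiFacet Ω), A.actF g F = F → g = 1

/-- The action on the vertices is blending. -/
def GAct.Blending (A : GAct Ω G) : Prop :=
  ∀ gs : Fin (n + 1) → G,
    (Function.Surjective fun i => A.act (gs i) i) →
      ∃ g : G, ∀ i, A.act g i = A.act (gs i) i

theorem GAct.mem_shift (A : GAct Ω G) (g : G) (i : Fin (n + 1)) (F : MFi Ω (A.act g i)) :
    i ∈ (A.actF g⁻¹ F.1).1.1 := by
  rw [A.collapse]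
  refine Finset.mem_image.2 ⟨A.act g i, F.2, ?_⟩
  rw [map_inv]
  first
    | simp
    | exact (A.act g).symm_apply_apply i

/-- For `β : ℱ̃ᵢ → I`, the shifted function `ᵍβ : ℱ̃_{g·i} → I`, `(ᵍβ)(F) = β (g⁻¹·F)`. -/
def GAct.shift (A : GAct Ω G) (g : G) (i : Fin (n + 1)) {I : Type} (β : MFi Ω i → I) :
    MFi Ω (A.act g i) → I :=
  fun F => β ⟨A.actF g⁻¹ F.1, A.mem_shift g i F⟩

/-! ### Polynomial spaces -/

/-- The space `𝒫 = ℝ[x⁽⁰⁾,…,x⁽ⁿ⁾]`, where block `i` has `m i` variables. -/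
abbrev PSpace {n : ℕ} (m : Fin (n + 1) → ℕ) : Type :=
  MvPolynomial (Σ i : Fin (n + 1), Fin (m i)) ℝ

/-- The local space `ℝ[x⁽ⁱ⁾]`. -/
abbrev LSpace {n : ℕ} (m : Fin (n + 1) → ℕ) (i : Fin (n + 1)) : Type :=
  MvPolynomial (Fin (m i)) ℝ

/-- The inclusion `ℝ[x⁽ⁱ⁾] → 𝒫`. -/
def emb {n : ℕ} (m : Fin (n + 1) → ℕ) (i : Fin (n + 1)) : LSpace m i →ₐ[ℝ] PSpace m :=
  rename fun j => (⟨i, j⟩ : Σ i : Fin (n + 1), Fin (m i))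

variable {m : Fin (n + 1) → ℕ}

/-- The variable permutation `x⁽ⁱ⁾ ↦ x⁽ᵍ·ⁱ⁾` induced by `g`. -/
def permVar (A : GAct Ω G) (hm : ∀ (g : G) (i : Fin (n + 1)), m (A.act g i) = m i) (g : G) :
    (Σ i : Fin (n + 1), Fin (m i)) → Σ i : Fin (n + 1), Fin (m i) :=
  fun v => ⟨A.act g v.1, Fin.cast (hm g v.1).symm v.2⟩

/-- `p` is `G`-invariant: `p(x⁽ᵍ⁰⁾,…,x⁽ᵍⁿ⁾) = p(x⁽⁰⁾,…,x⁽ⁿ⁾)` for all `g ∈ G`. -/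
def GInvPoly (A : GAct Ω G) (hm : ∀ (g : G) (i : Fin (n + 1)), m (A.act g i) = m i)
    (p : PSpace m) : Prop :=
  ∀ g : G, rename (permVar A hm g) p = p

/-! ### Sums of squares, cones -/

/-- `p` is a sum of squares. -/
def IsSos {σ : Type} (p : MvPolynomial σ ℝ) : Prop :=
  ∃ (N : ℕ) (q : Fin N → MvPolynomial σ ℝ), p = ∑ k : Fin N, q k ^ 2

/-- `C` is a convex cone. -/
def IsConvexConeSet {V : Type} [AddCommMonoid V] [Module ℝ V] (C : Set V) : Prop :=
  ∀ p ∈ C, ∀ q ∈ C, ∀ a b : ℝ, 0 ≤ a → 0 ≤ b → a • p + b • q ∈ C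

/-- The local cones agree along orbits, `C⁽ᵍ·ⁱ⁾ = C⁽ⁱ⁾` (under the renaming identification). -/
def ConeCompat (A : GAct Ω G) (hm : ∀ (g : G) (i : Fin (n + 1)), m (A.act g i) = m i)
    (C : ∀ i : Fin (n + 1), Set (LSpace m i)) : Prop :=
  ∀ (g : G) (i : Fin (n + 1)) (q : LSpace m (A.act g i)),
    q ∈ C (A.act g i) ↔ rename (Fin.cast (hm g i)) q ∈ C i

/-- The separable cone `C_sep = C⁽⁰⁾ ⊗ ⋯ ⊗ C⁽ⁿ⁾`. -/
def SepCone {n : ℕ} (m : Fin (n + 1) → ℕ) (C : ∀ i : Fin (n + 1), Set (LSpace m i)) :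
    Set (PSpace m) :=
  {p | ∃ (r : ℕ) (q : Fin r → ∀ i : Fin (n + 1), LSpace m i),
    (∀ j i, q j i ∈ C i) ∧ p = ∑ j : Fin r, ∏ i : Fin (n + 1), emb m i (q j i)}

/-! ### Decompositions and ranks -/

/-- `p` has an `Ω`-decomposition with index set of size `r`. -/
def HasODec {n : ℕ} (Ω : Finset (Fin (n + 1)) → ℕ) (m : Fin (n + 1) → ℕ) (p : PSpace m)
    (r : ℕ) : Prop :=
  ∃ q : ∀ i : Fin (n + 1), (MFi Ω i → Fin r) → LSpace m i,
    p = ∑ α : MultiFacet Ω → Fin r, ∏ i : Fin (n + 1), emb m i (q i (restr α i))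

/-- The `Ω`-rank of `p` (`⊤` if there is no decomposition). -/
def ORank {n : ℕ} (Ω : Finset (Fin (n + 1)) → ℕ) (m : Fin (n + 1) → ℕ) (p : PSpace m) : ℕ∞ :=
  ⨅ r : {r : ℕ // HasODec Ω m p r}, (r.1 : ℕ∞)

/-- `p` has an `(Ω,G)`-decomposition with index set of size `r`. -/
def HasOGDec (A : GAct Ω G) (hm : ∀ (g : G) (i : Fin (n + 1)), m (A.act g i) = m i)
    (p : PSpace m) (r : ℕ) : Prop :=
  ∃ q : ∀ i : Fin (n + 1), (MFi Ω i → Fin r) → LSpace m i,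
    (p = ∑ α : MultiFacet Ω → Fin r, ∏ i : Fin (n + 1), emb m i (q i (restr α i))) ∧
    ∀ (g : G) (i : Fin (n + 1)) (β : MFi Ω i → Fin r),
      rename (Fin.cast (hm g i)) (q (A.act g i) (A.shift g i β)) = q i β

/-- The `(Ω,G)`-rank of `p`. -/
def OGRank (A : GAct Ω G) (hm : ∀ (g : G) (i : Fin (n + 1)), m (A.act g i) = m i)
    (p : PSpace m) : ℕ∞ :=
  ⨅ r : {r : ℕ // HasOGDec A hm p r}, (r.1 : ℕ∞)

/-- `p` has a decomposition on the simplex `Σₙ` (a plain tensor decomposition) of size `r`. -/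
def HasTDec {n : ℕ} (m : Fin (n + 1) → ℕ) (p : PSpace m) (r : ℕ) : Prop :=
  ∃ q : Fin r → ∀ i : Fin (n + 1), LSpace m i,
    p = ∑ j : Fin r, ∏ i : Fin (n + 1), emb m i (q j i)

/-- The tensor rank `rank_{Σₙ}(p)`. -/
def TRank {n : ℕ} (m : Fin (n + 1) → ℕ) (p : PSpace m) : ℕ∞ :=
  ⨅ r : {r : ℕ // HasTDec m p r}, (r.1 : ℕ∞)

/-- Separable `Ω`-decomposition w.r.t. the local cones `C`. -/
def HasSepODec {n : ℕ} (Ω : Finset (Fin (n + 1)) → ℕ) (m : Fin (n + 1) → ℕ)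
    (C : ∀ i : Fin (n + 1), Set (LSpace m i)) (p : PSpace m) (r : ℕ) : Prop :=
  ∃ q : ∀ i : Fin (n + 1), (MFi Ω i → Fin r) → LSpace m i,
    (p = ∑ α : MultiFacet Ω → Fin r, ∏ i : Fin (n + 1), emb m i (q i (restr α i))) ∧
    ∀ i β, q i β ∈ C i

/-- The separable `Ω`-rank. -/
def SepORank {n : ℕ} (Ω : Finset (Fin (n + 1)) → ℕ) (m : Fin (n + 1) → ℕ)
    (C : ∀ i : Fin (n + 1), Set (LSpace m i)) (p : PSpace m) : ℕ∞ :=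
  ⨅ r : {r : ℕ // HasSepODec Ω m C p r}, (r.1 : ℕ∞)

/-- Separable `(Ω,G)`-decomposition w.r.t. the local cones `C`. -/
def HasSepOGDec (A : GAct Ω G) (hm : ∀ (g : G) (i : Fin (n + 1)), m (A.act g i) = m i)
    (C : ∀ i : Fin (n + 1), Set (LSpace m i)) (p : PSpace m) (r : ℕ) : Prop :=
  ∃ q : ∀ i : Fin (n + 1), (MFi Ω i → Fin r) → LSpace m i,
    (p = ∑ α : MultiFacet Ω → Fin r, ∏ i : Fin (n + 1), emb m i (q i (restr α i))) ∧
    (∀ (g : G) (i : Fin (n + 1)) (β : MFi Ω i → Fin r),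
      rename (Fin.cast (hm g i)) (q (A.act g i) (A.shift g i β)) = q i β) ∧
    ∀ i β, q i β ∈ C i

/-- The separable `(Ω,G)`-rank. -/
def SepOGRank (A : GAct Ω G) (hm : ∀ (g : G) (i : Fin (n + 1)), m (A.act g i) = m i)
    (C : ∀ i : Fin (n + 1), Set (LSpace m i)) (p : PSpace m) : ℕ∞ :=
  ⨅ r : {r : ℕ // HasSepOGDec A hm C p r}, (r.1 : ℕ∞)

/-- Separable decomposition on the simplex `Σₙ`. -/
def HasSepTDec {n : ℕ} (m : Fin (n + 1) → ℕ) (C : ∀ i : Fin (n + 1), Set (LSpace m i))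
    (p : PSpace m) (r : ℕ) : Prop :=
  ∃ q : Fin r → ∀ i : Fin (n + 1), LSpace m i,
    (∀ j i, q j i ∈ C i) ∧ p = ∑ j : Fin r, ∏ i : Fin (n + 1), emb m i (q j i)

/-- The separable rank on the simplex. -/
def SepTRank {n : ℕ} (m : Fin (n + 1) → ℕ) (C : ∀ i : Fin (n + 1), Set (LSpace m i))
    (p : PSpace m) : ℕ∞ :=
  ⨅ r : {r : ℕ // HasSepTDec m C p r}, (r.1 : ℕ∞)

/-- `p` has a sum-of-squares `(Ω,G)`-decomposition of size `r`: a `G`-invariant family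
`𝔮 = (q_k)` with `p = ∑ q_k²` together with an `(Ω,G)`-decomposition of the family. -/
def HasSosOGDec (A : GAct Ω G) (hm : ∀ (g : G) (i : Fin (n + 1)), m (A.act g i) = m i)
    (p : PSpace m) (r : ℕ) : Prop :=
  ∃ (s : Fin (n + 1) → ℕ) (hs : ∀ (g : G) (i : Fin (n + 1)), s (A.act g i) = s i)
    (q : ∀ i : Fin (n + 1), Fin (s i) → (MFi Ω i → Fin r) → LSpace m i),
    (p = ∑ k : ∀ i : Fin (n + 1), Fin (s i),
        (∑ α : MultiFacet Ω → Fin r, ∏ i : Fin (n + 1), emb m i (q i (k i) (restr α i))) ^ 2) ∧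
    ∀ (g : G) (i : Fin (n + 1)) (kk : Fin (s i)) (β : MFi Ω i → Fin r),
      rename (Fin.cast (hm g i))
        (q (A.act g i) (Fin.cast (hs g i).symm kk) (A.shift g i β)) = q i kk β

/-- The sos `(Ω,G)`-rank. -/
def SosOGRank (A : GAct Ω G) (hm : ∀ (g : G) (i : Fin (n + 1)), m (A.act g i) = m i)
    (p : PSpace m) : ℕ∞ :=
  ⨅ r : {r : ℕ // HasSosOGDec A hm p r}, (r.1 : ℕ∞)

/-! ### Local degree -/

/-- Every monomial of `p` has degree at most `d` in each block of variables. -/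
def locDegLE {n : ℕ} (m : Fin (n + 1) → ℕ) (p : PSpace m) (d : ℕ) : Prop :=
  ∀ s ∈ p.support, ∀ i : Fin (n + 1), (∑ j : Fin (m i), s ⟨i, j⟩) ≤ d

/-- The local degree of `p`. -/
def locDeg {n : ℕ} (m : Fin (n + 1) → ℕ) (p : PSpace m) : ℕ :=
  sInf {d : ℕ | locDegLE m p d}

/-! ### Tensor decompositions -/

/-- `(Ω,G)`-decomposition of a tensor `T ∈ ℝ^mv ⊗ ⋯ ⊗ ℝ^mv`. -/
def HasTOGDec (A : GAct Ω G) (mv : ℕ) (T : (Fin (n + 1) → Fin mv) → ℝ) (r : ℕ) : Prop :=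
  ∃ v : ∀ i : Fin (n + 1), (MFi Ω i → Fin r) → Fin mv → ℝ,
    (∀ jf : Fin (n + 1) → Fin mv,
      T jf = ∑ α : MultiFacet Ω → Fin r, ∏ i : Fin (n + 1), v i (restr α i) (jf i)) ∧
    ∀ (g : G) (i : Fin (n + 1)) (β : MFi Ω i → Fin r), v (A.act g i) (A.shift g i β) = v i β

/-- The `(Ω,G)`-rank of a tensor. -/
def TOGRank (A : GAct Ω G) (mv : ℕ) (T : (Fin (n + 1) → Fin mv) → ℝ) : ℕ∞ :=
  ⨅ r : {r : ℕ // HasTOGDec A mv T r}, (r.1 : ℕ∞)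

/-- Nonnegative `(Ω,G)`-decomposition of a tensor. -/
def HasNNTOGDec (A : GAct Ω G) (mv : ℕ) (T : (Fin (n + 1) → Fin mv) → ℝ) (r : ℕ) : Prop :=
  ∃ v : ∀ i : Fin (n + 1), (MFi Ω i → Fin r) → Fin mv → ℝ,
    (∀ jf : Fin (n + 1) → Fin mv,
      T jf = ∑ α : MultiFacet Ω → Fin r, ∏ i : Fin (n + 1), v i (restr α i) (jf i)) ∧
    (∀ (g : G) (i : Fin (n + 1)) (β : MFi Ω i → Fin r), v (A.act g i) (A.shift g i β) = v i β) ∧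
    ∀ i β j, 0 ≤ v i β j

/-- The nonnegative `(Ω,G)`-rank of a tensor. -/
def NNTOGRank (A : GAct Ω G) (mv : ℕ) (T : (Fin (n + 1) → Fin mv) → ℝ) : ℕ∞ :=
  ⨅ r : {r : ℕ // HasNNTOGDec A mv T r}, (r.1 : ℕ∞)

/-- Positive semidefinite `(Ω,G)`-decomposition of a tensor. -/
def HasPsdTOGDec (A : GAct Ω G) (mv : ℕ) (T : (Fin (n + 1) → Fin mv) → ℝ) (r : ℕ) : Prop :=
  ∃ E : ∀ i : Fin (n + 1), Fin mv → Matrix (MFi Ω i → Fin r) (MFi Ω i → Fin r) ℝ,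
    (∀ i j, (E i j).PosSemidef) ∧
    (∀ (g : G) (i : Fin (n + 1)) (j : Fin mv) (β β' : MFi Ω i → Fin r),
      E (A.act g i) j (A.shift g i β) (A.shift g i β') = E i j β β') ∧
    ∀ jf : Fin (n + 1) → Fin mv,
      T jf = ∑ α : MultiFacet Ω → Fin r, ∑ α' : MultiFacet Ω → Fin r,
        ∏ i : Fin (n + 1), E i (jf i) (restr α i) (restr α' i)

/-- The positive semidefinite `(Ω,G)`-rank of a tensor. -/
def PsdTOGRank (A : GAct Ω G) (mv : ℕ) (T : (Fin (n + 1) → Fin mv) → ℝ) : ℕ∞ :=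
  ⨅ r : {r : ℕ // HasPsdTOGDec A mv T r}, (r.1 : ℕ∞)

/-- The polynomial `p_T = ∑ T_{j₀…jₙ} (x⁽⁰⁾_{j₀})² ⋯ (x⁽ⁿ⁾_{jₙ})²` associated to a tensor. -/
def pT {n : ℕ} (mv : ℕ) (T : (Fin (n + 1) → Fin mv) → ℝ) :
    PSpace (fun _ : Fin (n + 1) => mv) :=
  ∑ jf : Fin (n + 1) → Fin mv, MvPolynomial.C (T jf) *
    ∏ i : Fin (n + 1), X (⟨i, jf i⟩ : Σ _ : Fin (n + 1), Fin mv) ^ 2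

/-! ### The Gram map -/

/-- Exponent vectors of monomials of degree at most `d` in `mv` variables. -/
abbrev Mon (mv d : ℕ) : Type := {k : Fin mv → Fin (d + 1) // (∑ j : Fin mv, (k j).val) ≤ d}

/-- The monomial at site `i` with exponent vector `k`. -/
def monAt {n : ℕ} {mv d : ℕ} (i : Fin (n + 1)) (k : Mon mv d) :
    PSpace (fun _ : Fin (n + 1) => mv) :=
  ∏ j : Fin mv, X (⟨i, j⟩ : Σ _ : Fin (n + 1), Fin mv) ^ (k.1 j).val

/-- The Gram map `𝒢(M) = 𝔪ᵗ M 𝔪`. -/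
def gram {n : ℕ} {mv d : ℕ}
    (M : Matrix (Fin (n + 1) → Mon mv d) (Fin (n + 1) → Mon mv d) ℝ) :
    PSpace (fun _ : Fin (n + 1) => mv) :=
  ∑ k : Fin (n + 1) → Mon mv d, ∑ k' : Fin (n + 1) → Mon mv d,
    M k k' • ∏ i : Fin (n + 1), (monAt i (k i) * monAt i (k' i))

/-! ### Homogeneous Gram map, norms -/

/-- Exponent vectors of monomials of degree exactly `d` in `mv + 1` variables. -/
abbrev MonH (mv d : ℕ) : Type :=
  {k : Fin (mv + 1) → Fin (d + 1) // (∑ j : Fin (mv + 1), (k j).val) = d}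

/-- The homogeneous monomial at site `i` with exponent vector `k`. -/
def monHAt {n : ℕ} {mv d : ℕ} (i : Fin (n + 1)) (k : MonH mv d) :
    PSpace (fun _ : Fin (n + 1) => mv + 1) :=
  ∏ j : Fin (mv + 1), X (⟨i, j⟩ : Σ _ : Fin (n + 1), Fin (mv + 1)) ^ (k.1 j).val

/-- The Gram map in the homogeneous setting. -/
def gramH {n : ℕ} {mv d : ℕ}
    (M : Matrix (Fin (n + 1) → MonH mv d) (Fin (n + 1) → MonH mv d) ℝ) :
    PSpace (fun _ : Fin (n + 1) => mv + 1) :=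
  ∑ k : Fin (n + 1) → MonH mv d, ∑ k' : Fin (n + 1) → MonH mv d,
    M k k' • ∏ i : Fin (n + 1), (monHAt i (k i) * monHAt i (k' i))

/-- The largest singular value (ℓ²-operator norm) of a real square matrix. -/
def sigmaMax {ι : Type} [Fintype ι] (M : Matrix ι ι ℝ) : ℝ :=
  sSup {r : ℝ | ∃ y : ι → ℝ, (∑ t, y t ^ 2) ≤ 1 ∧ r = Real.sqrt (∑ t, (M.mulVec y t) ^ 2)}

/-- The supremum norm of `p` on `𝕊 = 𝕊^m × ⋯ × 𝕊^m`. -/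
def InfNormH {n mv : ℕ} (p : PSpace (fun _ : Fin (n + 1) => mv + 1)) : ℝ :=
  sSup {r : ℝ | ∃ a : Fin (n + 1) → Fin (mv + 1) → ℝ,
    (∀ i, ∑ j, a i j ^ 2 = 1) ∧
    r = |MvPolynomial.eval (fun v : Σ _ : Fin (n + 1), Fin (mv + 1) => a v.1 v.2) p|}

/-- `p` is homogeneous of degree `d` in each block of variables separately. -/
def MultiHomog {n : ℕ} (m : Fin (n + 1) → ℕ) (d : ℕ) (p : PSpace m) : Prop :=
  ∀ s ∈ p.support, ∀ i : Fin (n + 1), (∑ j : Fin (m i), s ⟨i, j⟩) = d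

/-- `M` is a separable matrix: a sum of elementary tensors of psd matrices. -/
def SepGram {n : ℕ} {mv d : ℕ}
    (M : Matrix (Fin (n + 1) → MonH mv d) (Fin (n + 1) → MonH mv d) ℝ) : Prop :=
  ∃ (N : ℕ) (Ms : Fin N → ∀ _ : Fin (n + 1), Matrix (MonH mv d) (MonH mv d) ℝ),
    (∀ j i, (Ms j i).PosSemidef) ∧
    ∀ k k', M k k' = ∑ j : Fin N, ∏ i : Fin (n + 1), Ms j i (k i) (k' i)

/-- `μ(p)`: the smallest `λ > 0` such that `p = λ·𝒢(M)` for some `G`-invariant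
subnormalized separable matrix `M`. -/
def muP {n : ℕ} {Ω : Finset (Fin (n + 1)) → ℕ} {G : Type} [Group G] (mv d : ℕ) (A : GAct Ω G)
    (p : PSpace (fun _ : Fin (n + 1) => mv + 1)) : ℝ :=
  sInf {l : ℝ | 0 < l ∧
    ∃ M : Matrix (Fin (n + 1) → MonH mv d) (Fin (n + 1) → MonH mv d) ℝ,
      SepGram M ∧ (∑ k, M k k) ≤ 1 ∧
      (∀ (g : G) (k k' : Fin (n + 1) → MonH mv d),
        M (fun i => k (A.act g i)) (fun i => k' (A.act g i)) = M k k') ∧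
      p = l • gramH M}

/-! ### Factorizability -/

/-- `(Ω,G)` is factorizable. -/
def Factorizable (A : GAct Ω G) : Prop :=
  ∀ N : ℕ, ∃ Cf : ∀ i : Fin (n + 1), (MFi Ω i → Fin N) → ℝ,
    (∀ i β, 0 < Cf i β) ∧
    (∀ (g : G) (i : Fin (n + 1)) (β : MFi Ω i → Fin N),
      Cf (A.act g i) (A.shift g i β) = Cf i β) ∧
    ∀ α : MultiFacet Ω → Fin N,
      (∏ i : Fin (n + 1), Cf i (restr α i)) =
        ((Fintype.card {γ : MultiFacet Ω → Fin N //
          ∃ gs : Fin (n + 1) → G, ∀ i : Fin (n + 1), A.act (gs i) i = i ∧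
            ∀ F : MFi Ω i, γ (A.actF (gs i)⁻¹ F.1) = α F.1} : ℕ) : ℝ)⁻¹

/-! ### Two-block (single edge `Λ₁`) ranks -/

/-- The single-edge rank of a two-block polynomial. -/
def rank1 {mv : ℕ} (p : MvPolynomial (Fin mv ⊕ Fin mv) ℝ) : ℕ∞ :=
  ⨅ r : {r : ℕ // ∃ f g : Fin r → MvPolynomial (Fin mv) ℝ,
    p = ∑ α : Fin r, rename Sum.inl (f α) * rename Sum.inr (g α)}, (r.1 : ℕ∞)

/-- The single-edge separable rank (w.r.t. the local sos cones). -/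
def sep1 {mv : ℕ} (p : MvPolynomial (Fin mv ⊕ Fin mv) ℝ) : ℕ∞ :=
  ⨅ r : {r : ℕ // ∃ f g : Fin r → MvPolynomial (Fin mv) ℝ,
    (∀ α, IsSos (f α) ∧ IsSos (g α)) ∧
    p = ∑ α : Fin r, rename Sum.inl (f α) * rename Sum.inr (g α)}, (r.1 : ℕ∞)

/-- The single-edge sos rank. -/
def sos1 {mv : ℕ} (p : MvPolynomial (Fin mv ⊕ Fin mv) ℝ) : ℕ∞ :=
  ⨅ r : {r : ℕ // ∃ (s₀ s₁ : ℕ) (a : Fin s₀ → Fin r → MvPolynomial (Fin mv) ℝ)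
    (b : Fin s₁ → Fin r → MvPolynomial (Fin mv) ℝ),
    p = ∑ k : Fin s₀, ∑ l : Fin s₁,
      (∑ α : Fin r, rename Sum.inl (a k α) * rename Sum.inr (b l α)) ^ 2}, (r.1 : ℕ∞)

/-- The Euclidean-distance-matrix polynomial `p_m = ∑ (i-j)² xᵢ² yⱼ²`. -/
def pm (mv : ℕ) : MvPolynomial (Fin mv ⊕ Fin mv) ℝ :=
  ∑ i : Fin mv, ∑ j : Fin mv,
    MvPolynomial.C (((i : ℕ) : ℝ) - ((j : ℕ) : ℝ)) ^ 2 *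
      (X (Sum.inl i) ^ 2 * X (Sum.inr j) ^ 2)


/-- Constant block sizes are trivially compatible with any group action. -/
theorem constCompat {n : ℕ} {Ω : Finset (Fin (n + 1)) → ℕ} {G : Type} [Group G]
    (A : GAct Ω G) (mv : ℕ) :
    ∀ (g : G) (i : Fin (n + 1)),
      (fun _ : Fin (n + 1) => mv) (A.act g i) = (fun _ : Fin (n + 1) => mv) i :=
  fun _ _ => rfl
/-! ### Auxiliary machinery for statement1 -/

section Aux1

variable {n : ℕ} {Ω : Finset (Fin (n + 1)) → ℕ} {G : Type} [Group G]

theorem exists_facet_mem (hΩ : IsWSC Ω) (i : Fin (n + 1)) :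
    ∃ F, IsFacet Ω F ∧ i ∈ F := by
  obtain ⟨F, hFmem, hFmax⟩ := Finset.exists_max_image
    (Finset.univ.filter fun F : Finset (Fin (n + 1)) => Ω F ≠ 0 ∧ i ∈ F)
    Finset.card ⟨{i}, by simp [hΩ.2 i]⟩
  simp only [Finset.mem_filter, Finset.mem_univ, true_and] at hFmem
  refine ⟨F, ⟨hFmem.1, fun S hS hFS => ?_⟩, hFmem.2⟩
  have hSmem : S ∈ Finset.univ.filter fun F : Finset (Fin (n + 1)) => Ω F ≠ 0 ∧ i ∈ F := by
    simp only [Finset.mem_filter, Finset.mem_univ, true_and]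
    exact ⟨hS, hFS hFmem.2⟩
  exact (Finset.eq_of_subset_of_card_le hFS (hFmax S hSmem)).symm

theorem facet_nonempty (hΩ : IsWSC Ω) {F : Finset (Fin (n + 1))} (hF : IsFacet Ω F) :
    F.Nonempty := by
  rcases Finset.eq_empty_or_nonempty F with h | h
  · exfalso
    have h2 := hF.2 {0} (hΩ.2 0) (by simp [h])
    simp [h] at h2
  · exact h

theorem mfi_nonempty (hΩ : IsWSC Ω) (i : Fin (n + 1)) : Nonempty (MFi Ω i) := by
  obtain ⟨F, hF, hi⟩ := exists_facet_mem hΩ i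
  exact ⟨⟨⟨⟨F, hF⟩, ⟨0, Nat.pos_of_ne_zero hF.1⟩⟩, hi⟩⟩

theorem multiFacet_nonempty (hΩ : IsWSC Ω) : Nonempty (MultiFacet Ω) :=
  ⟨((mfi_nonempty hΩ 0).some).1⟩

/-- The orbit equivalence relation on multifacets. -/
def orbSetoid (A : GAct Ω G) : Setoid (MultiFacet Ω) where
  r F F' := ∃ g : G, A.actF g F' = F
  iseqv := by
    constructor
    · intro F; exact ⟨1, by simp⟩
    · rintro F F' ⟨g, rfl⟩
      refine ⟨g⁻¹, ?_⟩
      rw [← Equiv.Perm.mul_apply, ← map_mul]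
      simp
    · rintro F F' F'' ⟨g, rfl⟩ ⟨g', rfl⟩
      exact ⟨g * g', by rw [map_mul, Equiv.Perm.mul_apply]⟩

/-- A representative of the orbit of `F`. -/
def repF (A : GAct Ω G) (F : MultiFacet Ω) : MultiFacet Ω :=
  Quotient.out (Quotient.mk (orbSetoid A) F)

theorem repF_exists (A : GAct Ω G) (F : MultiFacet Ω) :
    ∃ g : G, A.actF g (repF A F) = F := by
  have h : (orbSetoid A).r (repF A F) F := Quotient.exact (Quotient.out_eq _)
  obtain ⟨g, hg⟩ := h
  refine ⟨g⁻¹, ?_⟩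
  rw [← hg, ← Equiv.Perm.mul_apply, ← map_mul]
  simp

/-- The group element carrying the orbit representative to `F`. -/
noncomputable def gFel (A : GAct Ω G) (F : MultiFacet Ω) : G := (repF_exists A F).choose

theorem gFel_spec (A : GAct Ω G) (F : MultiFacet Ω) :
    A.actF (gFel A F) (repF A F) = F := (repF_exists A F).choose_spec

theorem repF_act (A : GAct Ω G) (g : G) (F : MultiFacet Ω) :
    repF A (A.actF g F) = repF A F := by
  unfold repF
  congr 1
  exact Quotient.sound ⟨g, rfl⟩

theorem free_cancel {A : GAct Ω G} (hfree : A.Free) {g g' : G} {X : MultiFacet Ω}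
    (h : A.actF g X = A.actF g' X) : g = g' := by
  have h2 : A.actF (g'⁻¹ * g) X = X := by
    rw [map_mul, Equiv.Perm.mul_apply, h, ← Equiv.Perm.mul_apply, ← map_mul]
    simp
  have h3 := hfree _ _ h2
  rwa [inv_mul_eq_one, eq_comm] at h3

theorem gFel_act {A : GAct Ω G} (hfree : A.Free) (g : G) (F : MultiFacet Ω) :
    gFel A (A.actF g F) = g * gFel A F := by
  apply free_cancel hfree (X := repF A F)
  have h1 := gFel_spec A (A.actF g F)
  rw [repF_act] at h1
  rw [h1, map_mul, Equiv.Perm.mul_apply, gFel_spec]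

variable {m : Fin (n + 1) → ℕ}

/-- Transporting local polynomials along propositionally equal sites. -/
theorem rename_site_congr (pl : ∀ i : Fin (n + 1), LSpace m i) {i i' k : Fin (n + 1)}
    (h : i = i') (f : Fin (m i) → Fin (m k)) (f' : Fin (m i') → Fin (m k))
    (hf : ∀ x, (f x).val = x.val) (hf' : ∀ x, (f' x).val = x.val) :
    rename f (pl i) = rename f' (pl i') := by
  subst h
  have : f = f' := funext fun x => Fin.ext ((hf x).trans (hf' x).symm)
  rw [this]

theorem emb_perm (A : GAct Ω G) (hm : ∀ (g : G) (i : Fin (n + 1)), m (A.act g i) = m i)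
    (g : G) (i : Fin (n + 1)) (x : LSpace m i) :
    rename (permVar A hm g) (emb m i x) =
      emb m (A.act g i) (rename (Fin.cast (hm g i).symm) x) := by
  simp only [emb]
  rw [rename_rename, rename_rename]
  rfl

theorem transport (A : GAct Ω G) (hm : ∀ (g : G) (i : Fin (n + 1)), m (A.act g i) = m i)
    (p : PSpace m) (hinv : GInvPoly A hm p) (r : ℕ)
    (pl : Fin r → ∀ i : Fin (n + 1), LSpace m i)
    (hp : p = ∑ j : Fin r, ∏ i : Fin (n + 1), emb m i (pl j i)) (g : G) :
    ∑ j : Fin r, ∏ i : Fin (n + 1),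
      emb m i (rename (Fin.cast (hm g i)) (pl j (A.act g i))) = p := by
  conv_rhs => rw [← hinv g⁻¹, hp]
  rw [map_sum]
  refine Finset.sum_congr rfl fun j _ => ?_
  rw [map_prod]
  rw [← Equiv.prod_comp (A.act g⁻¹ : Equiv.Perm (Fin (n + 1)))
    (fun i => emb m i (rename (Fin.cast (hm g i)) (pl j (A.act g i))))]
  refine Finset.prod_congr rfl fun i _ => ?_
  rw [emb_perm]
  apply congrArg
  have hact : A.act g (A.act g⁻¹ i) = i := by
    rw [← Equiv.Perm.mul_apply, ← map_mul]
    simp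
  exact rename_site_congr (pl j) hact _ _ (fun _ => rfl) (fun _ => rfl)

end Aux1

section Aux2

variable {n : ℕ} {Ω : Finset (Fin (n + 1)) → ℕ} {G : Type} [Group G] [Fintype G]
variable {m : Fin (n + 1) → ℕ}

/-- The index bijection `Fin r × G ≃ Fin (r * |G|)`. -/
noncomputable def eqvI (G : Type) [Group G] [Fintype G] (r : ℕ) :
    Fin r × G ≃ Fin (r * Fintype.card G) :=
  Fintype.equivFinOfCardEq (by simp)

noncomputable def PhiM (A : GAct Ω G) (r : ℕ) (i : Fin (n + 1)) (jh : Fin r × G) :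
    MFi Ω i → Fin (r * Fintype.card G) :=
  fun F => eqvI G r (jh.1, (gFel A F.1)⁻¹ * jh.2)

noncomputable def PsiM (A : GAct Ω G) (r : ℕ) (jh : Fin r × G) :
    MultiFacet Ω → Fin (r * Fintype.card G) :=
  fun F => eqvI G r (jh.1, (gFel A F)⁻¹ * jh.2)

theorem PhiM_inj (hΩ : IsWSC Ω) (A : GAct Ω G) (r : ℕ) (i : Fin (n + 1)) :
    Function.Injective (PhiM A r i) := by
  intro jh jh' h
  obtain ⟨F⟩ := mfi_nonempty hΩ i
  have h3 := (eqvI G r).injective (congrFun h F)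
  rw [Prod.ext_iff] at h3
  exact Prod.ext h3.1 (mul_left_cancel h3.2)

theorem PsiM_inj (hΩ : IsWSC Ω) (A : GAct Ω G) (r : ℕ) :
    Function.Injective (PsiM A r) := by
  intro jh jh' h
  obtain ⟨F⟩ := multiFacet_nonempty hΩ
  have h3 := (eqvI G r).injective (congrFun h F)
  rw [Prod.ext_iff] at h3
  exact Prod.ext h3.1 (mul_left_cancel h3.2)

/-- The scaling constant `|G|^{-1/(n+1)}`. -/
noncomputable def lamG (G : Type) [Fintype G] (n : ℕ) : ℝ :=
  ((Fintype.card G : ℝ)⁻¹) ^ (((n : ℝ) + 1)⁻¹)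

theorem lamG_nonneg (G : Type) [Fintype G] (n : ℕ) : 0 ≤ lamG G n :=
  Real.rpow_nonneg (inv_nonneg.mpr (Nat.cast_nonneg _)) _

theorem lamG_pow (G : Type) [Group G] [Fintype G] (n : ℕ) :
    (Fintype.card G : ℝ) * lamG G n ^ (n + 1) = 1 := by
  have hc : (0 : ℝ) < (Fintype.card G : ℝ) := by exact_mod_cast Fintype.card_pos
  have h1 : lamG G n ^ (n + 1) = (Fintype.card G : ℝ)⁻¹ := by
    rw [lamG, ← Real.rpow_natCast (((Fintype.card G : ℝ)⁻¹) ^ (((n : ℝ) + 1)⁻¹)) (n + 1),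
      ← Real.rpow_mul (by positivity)]
    rw [show ((n : ℝ) + 1)⁻¹ * ((n + 1 : ℕ) : ℝ) = 1 by
      push_cast
      rw [inv_mul_cancel₀]
      positivity]
    exact Real.rpow_one _
  rw [h1, mul_inv_cancel₀ (ne_of_gt hc)]

/-- The local polynomials of the invariant decomposition. -/
noncomputable def qD (A : GAct Ω G) (hm : ∀ (g : G) (i : Fin (n + 1)), m (A.act g i) = m i)
    (r : ℕ) (pl : Fin r → ∀ i : Fin (n + 1), LSpace m i) (i : Fin (n + 1))
    (β : MFi Ω i → Fin (r * Fintype.card G)) : LSpace m i :=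
  if hβ : ∃ jh : Fin r × G, PhiM A r i jh = β then
    lamG G n • rename (Fin.cast (hm hβ.choose.2⁻¹ i)) (pl hβ.choose.1 (A.act hβ.choose.2⁻¹ i))
  else 0

theorem qD_Phi (hΩ : IsWSC Ω) (A : GAct Ω G)
    (hm : ∀ (g : G) (i : Fin (n + 1)), m (A.act g i) = m i)
    (r : ℕ) (pl : Fin r → ∀ i : Fin (n + 1), LSpace m i) (i : Fin (n + 1))
    (j : Fin r) (h : G) :
    qD A hm r pl i (PhiM A r i (j, h)) =
      lamG G n • rename (Fin.cast (hm h⁻¹ i)) (pl j (A.act h⁻¹ i)) := by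
  have hex : ∃ jh : Fin r × G, PhiM A r i jh = PhiM A r i (j, h) := ⟨(j, h), rfl⟩
  have h2 : hex.choose = (j, h) := PhiM_inj hΩ A r i hex.choose_spec
  have key : ∀ jh : Fin r × G, jh = (j, h) →
      (lamG G n • rename (Fin.cast (hm jh.2⁻¹ i)) (pl jh.1 (A.act jh.2⁻¹ i)) : LSpace m i) =
        lamG G n • rename (Fin.cast (hm h⁻¹ i)) (pl j (A.act h⁻¹ i)) := by
    rintro jh rfl
    rfl
  rw [qD, dif_pos hex]
  exact key hex.choose h2

theorem shift_PhiM {A : GAct Ω G} (hfree : A.Free) (r : ℕ) (g : G) (i : Fin (n + 1))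
    (j : Fin r) (h : G) :
    A.shift g i (PhiM A r i (j, h)) = PhiM A r (A.act g i) (j, g * h) := by
  funext F
  show eqvI G r (j, (gFel A (A.actF g⁻¹ F.1))⁻¹ * h)
    = eqvI G r (j, (gFel A F.1)⁻¹ * (g * h))
  have : (gFel A (A.actF g⁻¹ F.1))⁻¹ * h = (gFel A F.1)⁻¹ * (g * h) := by
    rw [gFel_act hfree]
    group
  rw [this]

theorem shift_PhiM_rev {A : GAct Ω G} (hfree : A.Free) (r : ℕ) (g : G) (i : Fin (n + 1))
    (β : MFi Ω i → Fin (r * Fintype.card G)) (jh : Fin r × G)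
    (hs : PhiM A r (A.act g i) jh = A.shift g i β) :
    PhiM A r i (jh.1, g⁻¹ * jh.2) = β := by
  funext F
  have hmem : A.act g i ∈ (A.actF g F.1).1.1 := by
    rw [A.collapse]
    exact Finset.mem_image_of_mem _ F.2
  have h1 := congrFun hs ⟨A.actF g F.1, hmem⟩
  have h2 : A.actF g⁻¹ (A.actF g F.1) = F.1 := by
    rw [← Equiv.Perm.mul_apply, ← map_mul]
    simp
  have h1' : eqvI G r (jh.1, (gFel A (A.actF g F.1))⁻¹ * jh.2) = β F :=
    h1.trans (congrArg β (Subtype.ext h2))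
  rw [← h1']
  show eqvI G r (jh.1, (gFel A F.1)⁻¹ * (g⁻¹ * jh.2)) = _
  have h3 : (gFel A F.1)⁻¹ * (g⁻¹ * jh.2) = (gFel A (A.actF g F.1))⁻¹ * jh.2 := by
    rw [gFel_act hfree]
    group
  rw [h3]

theorem qD_equiv (hΩ : IsWSC Ω) {A : GAct Ω G} (hfree : A.Free)
    (hm : ∀ (g : G) (i : Fin (n + 1)), m (A.act g i) = m i) (r : ℕ)
    (pl : Fin r → ∀ i : Fin (n + 1), LSpace m i) (g : G) (i : Fin (n + 1))
    (β : MFi Ω i → Fin (r * Fintype.card G)) :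
    rename (Fin.cast (hm g i)) (qD A hm r pl (A.act g i) (A.shift g i β)) =
      qD A hm r pl i β := by
  by_cases hβ : ∃ jh : Fin r × G, PhiM A r i jh = β
  · obtain ⟨⟨j, h⟩, rfl⟩ := hβ
    rw [shift_PhiM hfree, qD_Phi hΩ, qD_Phi hΩ, map_smul]
    congr 1
    rw [rename_rename]
    have hact : A.act (g * h)⁻¹ (A.act g i) = A.act h⁻¹ i := by
      rw [← Equiv.Perm.mul_apply, ← map_mul]
      congr 2
      group
    exact rename_site_congr (pl j) hact _ _ (fun _ => rfl) (fun _ => rfl)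
  · have hβ' : ¬ ∃ jh : Fin r × G, PhiM A r (A.act g i) jh = A.shift g i β := by
      rintro ⟨jh, hjh⟩
      exact hβ ⟨(jh.1, g⁻¹ * jh.2), shift_PhiM_rev hfree r g i β jh hjh⟩
    rw [qD, dif_neg hβ', qD, dif_neg hβ, map_zero]

theorem glue (hΩ : IsWSC Ω) (hconn : Conn Ω) (A : GAct Ω G) (r : ℕ)
    (α : MultiFacet Ω → Fin (r * Fintype.card G))
    (hall : ∀ i, ∃ jh : Fin r × G, PhiM A r i jh = restr α i) :
    ∃ jh : Fin r × G, PsiM A r jh = α := by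
  choose c hc using hall
  have step : ∀ a b : Fin (n + 1),
      (∃ F : Finset (Fin (n + 1)), IsFacet Ω F ∧ a ∈ F ∧ b ∈ F) → c a = c b := by
    rintro a b ⟨F, hF, haF, hbF⟩
    have hpos : 0 < Ω F := Nat.pos_of_ne_zero hF.1
    set Fm : MultiFacet Ω := ⟨⟨F, hF⟩, ⟨0, hpos⟩⟩ with hFm
    have h1 : PhiM A r a (c a) ⟨Fm, haF⟩ = α Fm := congrFun (hc a) ⟨Fm, haF⟩
    have h2 : PhiM A r b (c b) ⟨Fm, hbF⟩ = α Fm := congrFun (hc b) ⟨Fm, hbF⟩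
    have h3 : eqvI G r ((c a).1, (gFel A Fm)⁻¹ * (c a).2)
        = eqvI G r ((c b).1, (gFel A Fm)⁻¹ * (c b).2) := h1.trans h2.symm
    have h4 := (eqvI G r).injective h3
    rw [Prod.ext_iff] at h4
    exact Prod.ext h4.1 (mul_left_cancel h4.2)
  have hconst : ∀ i, c i = c 0 := by
    intro i
    have hchain := hconn 0 i
    induction hchain with
    | refl => rfl
    | tail h1 h2 ih => exact (step _ _ h2).symm.trans ih
  refine ⟨c 0, funext fun Fm => ?_⟩
  obtain ⟨i, hi⟩ := facet_nonempty hΩ Fm.1.2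
  have h1 : PhiM A r i (c i) ⟨Fm, hi⟩ = α Fm := congrFun (hc i) ⟨Fm, hi⟩
  rw [← h1, hconst i]
  rfl

theorem qD_sum (hΩ : IsWSC Ω) (hconn : Conn Ω) {A : GAct Ω G} (hfree : A.Free)
    (hm : ∀ (g : G) (i : Fin (n + 1)), m (A.act g i) = m i)
    (p : PSpace m) (hinv : GInvPoly A hm p) (r : ℕ)
    (pl : Fin r → ∀ i : Fin (n + 1), LSpace m i)
    (hp : p = ∑ j : Fin r, ∏ i : Fin (n + 1), emb m i (pl j i)) :
    p = ∑ α : MultiFacet Ω → Fin (r * Fintype.card G),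
        ∏ i : Fin (n + 1), emb m i (qD A hm r pl i (restr α i)) := by
  set f : (MultiFacet Ω → Fin (r * Fintype.card G)) → PSpace m :=
    fun α => ∏ i : Fin (n + 1), emb m i (qD A hm r pl i (restr α i)) with hf
  have hzero : ∀ α, (¬ ∃ jh : Fin r × G, PsiM A r jh = α) → f α = 0 := by
    intro α hα
    by_cases hall : ∀ i, ∃ jh : Fin r × G, PhiM A r i jh = restr α i
    · exact absurd (glue hΩ hconn A r α hall) hα
    · obtain ⟨i, hi⟩ := not_forall.mp hall
      refine Finset.prod_eq_zero (Finset.mem_univ i) ?_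
      rw [qD, dif_neg hi, map_zero]
  have himage : ∑ α : MultiFacet Ω → Fin (r * Fintype.card G), f α
      = ∑ jh : Fin r × G, f (PsiM A r jh) := by
    have h5 : ∑ α ∈ Finset.univ.image (PsiM A r), f α = ∑ jh : Fin r × G, f (PsiM A r jh) :=
      Finset.sum_image (fun x _ y _ hxy => PsiM_inj hΩ A r hxy)
    have h6 : ∀ α ∈ Finset.univ, α ∉ Finset.univ.image (PsiM A r) → f α = 0 := by
      intro α _ hα
      refine hzero α ?_
      rintro ⟨jh, hjh⟩
      exact hα (Finset.mem_image.mpr ⟨jh, Finset.mem_univ _, hjh⟩)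
    rw [← h5]
    exact (Finset.sum_subset (Finset.subset_univ _) h6).symm
  have hterm : ∀ (j : Fin r) (h : G), f (PsiM A r (j, h)) =
      C (lamG G n ^ (n + 1)) *
        ∏ i : Fin (n + 1), emb m i (rename (Fin.cast (hm h⁻¹ i)) (pl j (A.act h⁻¹ i))) := by
    intro j h
    have hres : ∀ i, restr (PsiM A r (j, h)) i = PhiM A r i (j, h) := fun i => rfl
    calc f (PsiM A r (j, h))
        = ∏ i : Fin (n + 1), emb m i (lamG G n •
            rename (Fin.cast (hm h⁻¹ i)) (pl j (A.act h⁻¹ i))) := by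
          refine Finset.prod_congr rfl fun i _ => ?_
          rw [hres i, qD_Phi hΩ]
      _ = ∏ i : Fin (n + 1), (C (lamG G n) *
            emb m i (rename (Fin.cast (hm h⁻¹ i)) (pl j (A.act h⁻¹ i)))) := by
          refine Finset.prod_congr rfl fun i _ => ?_
          rw [map_smul, Algebra.smul_def, MvPolynomial.algebraMap_eq]
      _ = (∏ _i : Fin (n + 1), C (lamG G n)) *
            ∏ i : Fin (n + 1), emb m i (rename (Fin.cast (hm h⁻¹ i)) (pl j (A.act h⁻¹ i))) :=
          Finset.prod_mul_distrib
      _ = C (lamG G n ^ (n + 1)) *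
            ∏ i : Fin (n + 1), emb m i (rename (Fin.cast (hm h⁻¹ i)) (pl j (A.act h⁻¹ i))) := by
          rw [Finset.prod_const, Finset.card_univ, Fintype.card_fin, ← map_pow]
  rw [himage, Fintype.sum_prod_type_right]
  have hinner : ∀ h : G, (∑ j : Fin r, f (PsiM A r (j, h)))
      = C (lamG G n ^ (n + 1)) * p := by
    intro h
    calc (∑ j : Fin r, f (PsiM A r (j, h)))
        = ∑ j : Fin r, C (lamG G n ^ (n + 1)) *
            ∏ i : Fin (n + 1), emb m i (rename (Fin.cast (hm h⁻¹ i)) (pl j (A.act h⁻¹ i))) :=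
          Finset.sum_congr rfl fun j _ => hterm j h
      _ = C (lamG G n ^ (n + 1)) * ∑ j : Fin r,
            ∏ i : Fin (n + 1), emb m i (rename (Fin.cast (hm h⁻¹ i)) (pl j (A.act h⁻¹ i))) :=
          (Finset.mul_sum _ _ _).symm
      _ = C (lamG G n ^ (n + 1)) * p := by
          rw [transport A hm p hinv r pl hp h⁻¹]
  rw [Finset.sum_congr rfl fun h _ => hinner h, Finset.sum_const, Finset.card_univ,
    nsmul_eq_mul, ← map_natCast (C : ℝ →+* PSpace m) (Fintype.card G), ← mul_assoc, ← map_mul,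
    lamG_pow G n, map_one, one_mul]

end Aux2

section Aux3

variable {n : ℕ} {m : Fin (n + 1) → ℕ}

theorem monomial_prod (m : Fin (n + 1) → ℕ) (s : (Σ i : Fin (n + 1), Fin (m i)) →₀ ℕ) (c : ℝ) :
    (monomial s c : PSpace m) =
      ∏ i : Fin (n + 1), emb m i
        ((if i = 0 then C c else 1) * ∏ j : Fin (m i), X j ^ s ⟨i, j⟩) := by
  have hrhs : ∀ i : Fin (n + 1),
      emb m i ((if i = 0 then C c else 1) * ∏ j : Fin (m i), X j ^ s ⟨i, j⟩)
      = (if i = 0 then C c else 1) *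
          ∏ j : Fin (m i), (X ⟨i, j⟩ : PSpace m) ^ s ⟨i, j⟩ := by
    intro i
    rw [map_mul, map_prod]
    congr 1
    · split <;> simp [emb]
    · refine Finset.prod_congr rfl fun j _ => ?_
      rw [map_pow]
      congr 1
      simp [emb]
  rw [Finset.prod_congr rfl fun i _ => hrhs i, Finset.prod_mul_distrib]
  rw [Finset.prod_ite_eq' Finset.univ (0 : Fin (n + 1)) (fun _ => C c)]
  simp only [Finset.mem_univ, if_true]
  rw [MvPolynomial.monomial_eq]
  congr 1
  rw [Finsupp.prod_fintype _ _ (fun v => pow_zero _)]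
  rw [← Finset.univ_sigma_univ, Finset.prod_sigma]

theorem exists_tdec (m : Fin (n + 1) → ℕ) (p : PSpace m) :
    ∃ (r : ℕ) (pl : Fin r → ∀ i : Fin (n + 1), LSpace m i),
      p = ∑ j : Fin r, ∏ i : Fin (n + 1), emb m i (pl j i) := by
  refine ⟨p.support.card, fun jj i =>
    (if i = 0 then C (MvPolynomial.coeff (p.support.equivFin.symm jj).1 p) else 1) *
      ∏ j : Fin (m i), X j ^ ((p.support.equivFin.symm jj).1 ⟨i, j⟩), ?_⟩
  conv_lhs => rw [← MvPolynomial.support_sum_monomial_coeff p]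
  rw [← Finset.sum_coe_sort p.support
    (fun s => (monomial s (MvPolynomial.coeff s p) : PSpace m))]
  rw [← Equiv.sum_comp p.support.equivFin.symm
    (fun s : {x // x ∈ p.support} => (monomial s.1 (MvPolynomial.coeff s.1 p) : PSpace m))]
  exact Finset.sum_congr rfl fun jj _ => monomial_prod m _ _

end Aux3
/-- existence of `(Ω,G)`-decompositions for free actions, with local polynomials
nonnegative multiples of the given ones along the orbit. -/
theorem statement1 {n : ℕ} {Ω : Finset (Fin (n + 1)) → ℕ} (hΩ : IsWSC Ω) (hconn : Conn Ω)
    {G : Type} [Group G] [Fintype G] (A : GAct Ω G) (hfree : A.Free)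
    {m : Fin (n + 1) → ℕ} (hm : ∀ (g : G) (i : Fin (n + 1)), m (A.act g i) = m i)
    (p : PSpace m) (hinv : GInvPoly A hm p) :
    OGRank A hm p < ⊤ ∧
    ∀ (r : ℕ) (pl : Fin r → ∀ i : Fin (n + 1), LSpace m i),
      p = ∑ j : Fin r, ∏ i : Fin (n + 1), emb m i (pl j i) →
      ∃ (r' : ℕ) (q : ∀ i : Fin (n + 1), (MFi Ω i → Fin r') → LSpace m i),
        (p = ∑ α : MultiFacet Ω → Fin r', ∏ i : Fin (n + 1), emb m i (q i (restr α i))) ∧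
        (∀ (g : G) (i : Fin (n + 1)) (β : MFi Ω i → Fin r'),
          rename (Fin.cast (hm g i)) (q (A.act g i) (A.shift g i β)) = q i β) ∧
        ∀ (i : Fin (n + 1)) (β : MFi Ω i → Fin r'),
          ∃ c : ℝ, 0 ≤ c ∧ ∃ (g : G) (j : Fin r),
            q i β = c • rename (Fin.cast (hm g i)) (pl j (A.act g i)) := by
  have key : ∀ (r : ℕ) (pl : Fin r → ∀ i : Fin (n + 1), LSpace m i),
      p = ∑ j : Fin r, ∏ i : Fin (n + 1), emb m i (pl j i) →
      ∃ (r' : ℕ) (q : ∀ i : Fin (n + 1), (MFi Ω i → Fin r') → LSpace m i),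
        (p = ∑ α : MultiFacet Ω → Fin r', ∏ i : Fin (n + 1), emb m i (q i (restr α i))) ∧
        (∀ (g : G) (i : Fin (n + 1)) (β : MFi Ω i → Fin r'),
          rename (Fin.cast (hm g i)) (q (A.act g i) (A.shift g i β)) = q i β) ∧
        ∀ (i : Fin (n + 1)) (β : MFi Ω i → Fin r'),
          ∃ c : ℝ, 0 ≤ c ∧ ∃ (g : G) (j : Fin r),
            q i β = c • rename (Fin.cast (hm g i)) (pl j (A.act g i)) := by
    intro r pl hp
    refine ⟨r * Fintype.card G, qD A hm r pl, qD_sum hΩ hconn hfree hm p hinv r pl hp,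
      fun g i β => qD_equiv hΩ hfree hm r pl g i β, ?_⟩
    intro i β
    by_cases hβ : ∃ jh : Fin r × G, PhiM A r i jh = β
    · obtain ⟨⟨j, h⟩, rfl⟩ := hβ
      exact ⟨lamG G n, lamG_nonneg G n, h⁻¹, j, qD_Phi hΩ A hm r pl i j h⟩
    · have hr : 0 < r := by
        obtain ⟨F⟩ := mfi_nonempty hΩ i
        have h2 := (β F).2
        have h3 : 0 < r * Fintype.card G := Nat.lt_of_le_of_lt (Nat.zero_le _) h2
        exact Nat.pos_of_ne_zero (fun hz => by simp [hz] at h3)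
      refine ⟨0, le_refl 0, 1, ⟨0, hr⟩, ?_⟩
      rw [qD, dif_neg hβ, zero_smul]
  refine ⟨?_, key⟩
  obtain ⟨r, pl, hp⟩ := exists_tdec m p
  obtain ⟨r', q, h1, h2, -⟩ := key r pl hp
  have hdec : HasOGDec A hm p r' := ⟨q, h1, h2⟩
  have hle : OGRank A hm p ≤ (r' : ℕ∞) :=
    iInf_le _ (⟨r', hdec⟩ : {r : ℕ // HasOGDec A hm p r})
  exact lt_of_le_of_lt hle (Ne.lt_top (by simp))

end
end PolyDec
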